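/- (Theorem 2, minimum-matching form.) Suppose in addition that γ'' = 2γ', that there exists at least one MMDC between A and B, that M is a minimum weight perfect matching of the constructed graph G (i.e. Weight(M) ≤ Weight(M'') for every perfect matching M'' of G), and that L is a minimum-cost MMDC between A and B (i.e. c(L) ≤ c(L'') for every MMDC L''). Then Weight(Main(M)) = c(L). -/

import Mathlib

open Finset

section Construction

variable {s t : ℕ}

/-- The left part `S` of the constructed complete bipartite graph `G`:
`A_i` (`α i` copies of `a_i`), `A'_i` (`α' i − α i` copies of `a_i`),
the dummy sets `X_j` (`β' j − β j` vertices) and `W_j` (`s − β' j` vertices). -/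
abbrev LeftV (s t : ℕ) (α α' : Fin s → ℕ) (β β' : Fin t → ℕ) : Type :=
  ((Σ i : Fin s, Fin (α i)) ⊕ (Σ i : Fin s, Fin (α' i - α i))) ⊕
  ((Σ j : Fin t, Fin (β' j - β j)) ⊕ (Σ j : Fin t, Fin (s - β' j)))

/-- The right part `T` of the constructed graph: the sets `Bset_i` (vertex `(i, j)`
is the copy `b_{ji}` of `b_j` lying in `Bset_i`; thus `B_j = {(i, j) : i}`) together
with the compensator set `Y` of `Σ_i α'_i − Σ_j β_j` dummy vertices. -/
abbrev RightV (s t : ℕ) (α' : Fin s → ℕ) (β : Fin t → ℕ) : Type :=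
  (Fin s × Fin t) ⊕ Fin (∑ i, α' i - ∑ j, β j)

variable {α α' : Fin s → ℕ} {β β' : Fin t → ℕ}

/-- Adjacency in the constructed graph `G`: each vertex of `A_i ∪ A'_i` is joined to every
vertex of `Bset_i`; each vertex of `A'_i` is joined to every vertex of `Y`; each vertex of
`X_j` is joined to every vertex of `B_j` and to every vertex of `Y`; each vertex of `W_j`
is joined to every vertex of `B_j`. -/
def Adj : LeftV s t α α' β β' → RightV s t α' β → Prop
  | .inl (.inl ⟨i, _⟩), .inl (i', _) => i' = i       -- A_i — Bset_i
  | .inl (.inl _), .inr _ => False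
  | .inl (.inr ⟨i, _⟩), .inl (i', _) => i' = i       -- A'_i — Bset_i
  | .inl (.inr _), .inr _ => True                     -- A'_i — Y
  | .inr (.inl ⟨j, _⟩), .inl (_, j') => j' = j       -- X_j — B_j
  | .inr (.inl _), .inr _ => True                     -- X_j — Y
  | .inr (.inr ⟨j, _⟩), .inl (_, j') => j' = j       -- W_j — B_j
  | .inr (.inr _), .inr _ => False

/-- Edge weights of the constructed graph `G`. -/
def wt (δ : Fin s → Fin t → ℝ) (γ' γ'' : ℝ) : LeftV s t α α' β β' → RightV s t α' β → ℝ
  | .inl _, .inl (i, j) => δ i j     -- main edges into b_{ji}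
  | .inl (.inl _), .inr _ => 0
  | .inl (.inr _), .inr _ => γ'      -- A'_i — Y
  | .inr (.inl _), .inl _ => γ'      -- X_j — B_j
  | .inr (.inl _), .inr _ => γ''     -- X_j — Y
  | .inr (.inr _), _ => 0            -- W_j — B_j

/-- An edge is a main edge when it joins `⋃_i (A_i ∪ A'_i)` to `⋃_i Bset_i`. -/
def IsMainEdge : LeftV s t α α' β β' → RightV s t α' β → Bool
  | .inl _, .inl _ => true
  | _, _ => false

/-- A perfect matching of `G` is a bijection between the two parts all of whose
pairs are edges of `G`. -/
def IsPM (M : LeftV s t α α' β β' ≃ RightV s t α' β) : Prop :=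
  ∀ v, Adj v (M v)

/-- `Weight(M)`, the total weight of a perfect matching. -/
noncomputable def totalWeight (δ : Fin s → Fin t → ℝ) (γ' γ'' : ℝ)
    (M : LeftV s t α α' β β' ≃ RightV s t α' β) : ℝ :=
  ∑ v, wt δ γ' γ'' v (M v)

/-- `Weight(Main(M))`, the total weight of the main edges of `M`. -/
noncomputable def mainWeight (δ : Fin s → Fin t → ℝ) (γ' γ'' : ℝ)
    (M : LeftV s t α α' β β' ≃ RightV s t α' β) : ℝ :=
  ∑ v ∈ univ.filter (fun v => IsMainEdge v (M v)), wt δ γ' γ'' v (M v)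

/-- `|Main(M)|`, the number of main edges of `M`. -/
def mainCount (M : LeftV s t α α' β β' ≃ RightV s t α' β) : ℕ :=
  (univ.filter (fun v => IsMainEdge v (M v))).card

/-- `L ⊆ A × B` is an MMDC between `A` and `B`: each `a_i` lies in at least `α i` and at
most `α' i` pairs, and each `b_j` lies in at least `β j` and at most `β' j` pairs. -/
def IsMMDC (α α' : Fin s → ℕ) (β β' : Fin t → ℕ) (L : Finset (Fin s × Fin t)) : Prop :=
  (∀ i, α i ≤ (L.filter (fun p => p.1 = i)).card ∧
    (L.filter (fun p => p.1 = i)).card ≤ α' i) ∧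
  (∀ j, β j ≤ (L.filter (fun p => p.2 = j)).card ∧
    (L.filter (fun p => p.2 = j)).card ≤ β' j)

/-- `c(L)`, the cost of a matching `L` between `A` and `B`. -/
noncomputable def cost (δ : Fin s → Fin t → ℝ) (L : Finset (Fin s × Fin t)) : ℝ :=
  ∑ p ∈ L, δ p.1 p.2

end Construction

/-! With `γ'' = 2γ'`, a non-main edge of a perfect matching costs `γ'` per endpoint lying in
`X ∪ Y` (an `X_j`–`Y` edge has both), and every vertex of `X ∪ Y` is covered, so
`Weight(M) = Weight(Main(M)) + γ' (|X| + |Y|)` for every perfect matching `M`. The cells `b_{ji}`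
covered by main edges form an MMDC whose cost is `Weight(Main(M))`, and conversely every MMDC `L`
arises from some perfect matching: the cells of `L` in row `i` are covered by `A_i` and the first
copies of `A'_i`, the other cells of column `j` by `W_j` and the first copies of `X_j`, and the
remaining copies in `A'` and `X` are matched to `Y`, which then has exactly the right size.
So minimising `Weight(M)` and minimising `c(L)` are the same problem. -/

theorem Finset.card_filter_and_sigma_fst_eq {ι : Type*} [Fintype ι] [DecidableEq ι]
    {κ : ι → Type*} [∀ i, Fintype (κ i)] (p : (Σ i, κ i) → Prop) [DecidablePred p] (i : ι) :
    #(univ.filter fun x : Σ i, κ i => p x ∧ x.1 = i) =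
      #(univ.filter fun k : κ i => p ⟨i, k⟩) := by
  rw [card_filter, card_filter, Fintype.sum_sigma, sum_eq_single i]
  · simp
  · intro j _ hj
    simp [hj]
  · simp

theorem Finset.card_filter_sigma_fst_eq {ι : Type*} [Fintype ι] [DecidableEq ι]
    {κ : ι → Type*} [∀ i, Fintype (κ i)] (i : ι) :
    #(univ.filter fun x : Σ i, κ i => x.1 = i) = Fintype.card (κ i) := by
  simpa using card_filter_and_sigma_fst_eq (fun _ => True) i

theorem Fin.card_filter_add_lt (n a d : ℕ) :
    #(univ.filter fun k : Fin n => k + a < d) = min n (d - a) := by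
  rw [← Fin.card_filter_val_lt]
  congr 1
  ext k
  simp only [mem_filter, mem_univ, true_and]
  omega

theorem Equiv.card_filter_symm_inl {α β γ : Type*} [Fintype α] [Fintype β] [Fintype γ]
    (M : α ≃ β ⊕ γ) (q : α → Prop) [DecidablePred q] :
    #(univ.filter fun b => q (M.symm (.inl b))) =
      #(univ.filter fun a => q a ∧ (M a).isLeft) := by
  rw [← card_map ⟨fun b => M.symm (.inl b), M.symm.injective.comp Sum.inl_injective⟩]
  congr 1
  ext a
  simp only [mem_map, mem_filter, mem_univ, true_and, Function.Embedding.coeFn_mk]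
  constructor
  · rintro ⟨b, hb, rfl⟩
    simpa using hb
  · rintro ⟨hq, hl⟩
    obtain ⟨b, hb⟩ := Sum.isLeft_iff.mp hl
    exact ⟨b, by rwa [← hb, M.symm_apply_apply], by rw [← hb, M.symm_apply_apply]⟩

theorem exists_equiv_forall_map_eq {α β κ : Type*} [Fintype α] [Fintype β] [Fintype κ]
    [DecidableEq κ] (f : α → κ) (g : β → κ) (c₀ : κ)
    (hcard : Fintype.card α = Fintype.card β)
    (hfib : ∀ c ≠ c₀, #(univ.filter fun a => f a = c) = #(univ.filter fun b => g b = c)) :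
    ∃ e : α ≃ β, ∀ a, g (e a) = f a := by
  have hall : ∀ c, Fintype.card {a // f a = c} = Fintype.card {b // g b = c} := by
    intro c
    simp only [Fintype.card_subtype]
    by_cases hc : c = c₀
    · -- the fibre over `c₀` is forced by the total count
      subst hc
      have hf := card_eq_sum_card_fiberwise (s := univ) (t := univ) fun a _ => mem_univ (f a)
      have hg := card_eq_sum_card_fiberwise (s := univ) (t := univ) fun b _ => mem_univ (g b)
      rw [card_univ, ← add_sum_erase _ _ (mem_univ c)] at hf hg
      rw [sum_congr rfl fun d hd => hfib d (ne_of_mem_erase hd)] at hf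
      omega
    · exact hfib c hc
  exact ⟨.ofFiberEquiv fun c => Fintype.equivOfCardEq (hall c), Equiv.ofFiberEquiv_map _⟩

section Reduction

variable {s t : ℕ} {α α' : Fin s → ℕ} {β β' : Fin t → ℕ}

def xCharge (γ' : ℝ) : LeftV s t α α' β β' → ℝ
  | .inr (.inl _) => γ'
  | _ => 0

def yCharge (γ' : ℝ) : RightV s t α' β → ℝ
  | .inr _ => γ'
  | _ => 0

theorem wt_eq_main_add_charges (δ : Fin s → Fin t → ℝ) (γ' : ℝ)
    {v : LeftV s t α α' β β'} {r : RightV s t α' β} (h : Adj v r) :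
    wt δ γ' (2 * γ') v r =
      (if IsMainEdge v r then wt δ γ' (2 * γ') v r else 0) + xCharge γ' v + yCharge γ' r := by
  rcases v with ((_ | _) | (_ | _)) <;> rcases r with (_ | _) <;>
    simp_all [Adj, wt, IsMainEdge, xCharge, yCharge, two_mul]

theorem totalWeight_eq_mainWeight_add (δ : Fin s → Fin t → ℝ) (γ' : ℝ)
    {M : LeftV s t α α' β β' ≃ RightV s t α' β} (hM : IsPM M) :
    totalWeight δ γ' (2 * γ') M = mainWeight δ γ' (2 * γ') M +
      (∑ v : LeftV s t α α' β β', xCharge γ' v + ∑ r : RightV s t α' β, yCharge γ' r) := by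
  rw [totalWeight, mainWeight, sum_filter, ← M.sum_comp (yCharge γ'),
    sum_congr rfl fun v _ => wt_eq_main_add_charges δ γ' (hM v)]
  simp only [sum_add_distrib]
  ring

/-- `(i, j) ∈ mainPairs M` when the copy `b_{ji}` is matched into `⋃ᵢ (A_i ∪ A'_i)`. -/
def mainPairs (M : LeftV s t α α' β β' ≃ RightV s t α' β) : Finset (Fin s × Fin t) :=
  univ.filter fun p => (M.symm (.inl p)).isLeft

theorem mainWeight_eq_cost_mainPairs (δ : Fin s → Fin t → ℝ) (γ' γ'' : ℝ)
    (M : LeftV s t α α' β β' ≃ RightV s t α' β) :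
    mainWeight δ γ' γ'' M = cost δ (mainPairs M) := by
  have hcell : ∀ (v : LeftV s t α α' β β') p,
      (if IsMainEdge v (.inl p) then wt δ γ' γ'' v (.inl p) else 0) =
        if v.isLeft then δ p.1 p.2 else 0 := by
    rintro ((_ | _) | (_ | _)) p <;> rfl
  have hdummy : ∀ (v : LeftV s t α α' β β') y, IsMainEdge v (.inr y) = false := by
    rintro ((_ | _) | (_ | _)) y <;> rfl
  rw [mainWeight, cost, mainPairs, sum_filter, sum_filter, ← M.symm.sum_comp,
    Fintype.sum_sum_type]
  simp [hcell, hdummy]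

def side : LeftV s t α α' β β' → Fin s ⊕ Fin t
  | .inl (.inl ⟨i, _⟩) | .inl (.inr ⟨i, _⟩) => .inl i
  | .inr (.inl ⟨j, _⟩) | .inr (.inr ⟨j, _⟩) => .inr j

def JoinsY : LeftV s t α α' β β' → Prop
  | .inl (.inr _) | .inr (.inl _) => True
  | _ => False

instance : DecidablePred (JoinsY (s := s) (t := t) (α := α) (α' := α') (β := β) (β' := β')) :=
  fun v => by rcases v with ((_ | _) | (_ | _)) <;> unfold JoinsY <;> infer_instance

def cellSide (L : Finset (Fin s × Fin t)) (p : Fin s × Fin t) : Fin s ⊕ Fin t :=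
  if p ∈ L then .inl p.1 else .inr p.2

theorem side_eq_of_adj {v : LeftV s t α α' β β'} {p : Fin s × Fin t}
    (h : Adj (α' := α') (β := β) v (.inl p)) :
    side v = if v.isLeft then .inl p.1 else .inr p.2 := by
  rcases v with ((_ | _) | (_ | _)) <;> simp_all [Adj, side]

theorem adj_inl_of_side_eq_cellSide {L : Finset (Fin s × Fin t)} {v : LeftV s t α α' β β'}
    {p : Fin s × Fin t} (h : side v = cellSide L p) : Adj (α' := α') (β := β) v (.inl p) := by
  unfold cellSide at h
  split_ifs at h <;> rcases v with ((_ | _) | (_ | _)) <;> simp_all [Adj, side]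

theorem adj_inr_of_joinsY {v : LeftV s t α α' β β'} (h : JoinsY v) (y) :
    Adj (α' := α') (β := β) v (.inr y) := by
  rcases v with ((_ | _) | (_ | _)) <;> simp_all [Adj, JoinsY]

theorem card_side_eq_inl (i : Fin s) :
    #(univ.filter fun v : LeftV s t α α' β β' => side v = .inl i) = α i + (α' i - α i) := by
  rw [card_filter]
  simp [Fintype.sum_sum_type, side, card_filter_sigma_fst_eq]

theorem card_side_eq_inr (j : Fin t) :
    #(univ.filter fun v : LeftV s t α α' β β' => side v = .inr j) =
      (β' j - β j) + (s - β' j) := by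
  rw [card_filter]
  simp [Fintype.sum_sum_type, side, card_filter_sigma_fst_eq]

theorem card_side_eq_inl_not_joinsY (i : Fin s) :
    #(univ.filter fun v : LeftV s t α α' β β' => side v = .inl i ∧ ¬ JoinsY v) = α i := by
  rw [card_filter]
  simp [Fintype.sum_sum_type, side, JoinsY, card_filter_sigma_fst_eq]

theorem card_side_eq_inr_not_joinsY (j : Fin t) :
    #(univ.filter fun v : LeftV s t α α' β β' => side v = .inr j ∧ ¬ JoinsY v) = s - β' j := by
  rw [card_filter]
  simp [Fintype.sum_sum_type, side, JoinsY, card_filter_sigma_fst_eq]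

theorem card_cellSide_eq_inl (L : Finset (Fin s × Fin t)) (i : Fin s) :
    #(univ.filter fun p => cellSide L p = .inl i) = #(L.filter fun p => p.1 = i) := by
  congr 1
  ext p
  simp only [mem_filter, mem_univ, true_and]
  unfold cellSide
  split_ifs <;> simp_all

theorem card_cellSide_eq_inr_add (L : Finset (Fin s × Fin t)) (j : Fin t) :
    #(univ.filter fun p => cellSide L p = .inr j) + #(L.filter fun p => p.2 = j) = s := by
  have hcol : #(univ.filter fun p : Fin s × Fin t => p.2 = j) = s := by
    rw [card_filter, Fintype.sum_prod_type]
    simp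
  have hsplit := card_filter_add_card_filter_not (s := univ.filter fun p => p.2 = j) (· ∈ L)
  rw [hcol, filter_filter, filter_filter] at hsplit
  have hout : #(univ.filter fun p => cellSide L p = .inr j) =
      #(univ.filter fun p => p.2 = j ∧ p ∉ L) := by
    congr 1
    ext p
    simp only [mem_filter, mem_univ, true_and]
    unfold cellSide
    split_ifs <;> simp_all
  have hin : #(L.filter fun p => p.2 = j) = #(univ.filter fun p => p.2 = j ∧ p ∈ L) := by
    congr 1
    ext p
    simp only [mem_filter, mem_univ, true_and, and_comm]
  omega

section MatchingToMMDC

variable {M : LeftV s t α α' β β' ≃ RightV s t α' β}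

theorem IsPM.isLeft_of_not_joinsY (hM : IsPM M) {v : LeftV s t α α' β β'} (hv : ¬ JoinsY v) :
    (M v).isLeft := by
  have := hM v
  rcases hMv : M v with _ | _
  · rfl
  · rw [hMv] at this
    rcases v with ((_ | _) | (_ | _)) <;> simp_all [Adj, JoinsY]

theorem IsPM.side_symm_inl (hM : IsPM M) (p : Fin s × Fin t) :
    side (M.symm (.inl p)) = cellSide (mainPairs M) p := by
  have h := hM (M.symm (.inl p))
  rw [M.apply_symm_apply] at h
  simp [side_eq_of_adj h, cellSide, mainPairs]

theorem IsPM.card_cellSide_mainPairs (hM : IsPM M) (c : Fin s ⊕ Fin t) :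
    #(univ.filter fun p => cellSide (mainPairs M) p = c) =
      #(univ.filter fun v => side v = c ∧ (M v).isLeft) := by
  simp_rw [← hM.side_symm_inl]
  exact M.card_filter_symm_inl fun v => side v = c

theorem IsPM.card_side_not_joinsY_le (hM : IsPM M) (c : Fin s ⊕ Fin t) :
    #(univ.filter fun v : LeftV s t α α' β β' => side v = c ∧ ¬ JoinsY v) ≤
      #(univ.filter fun v => side v = c ∧ (M v).isLeft) :=
  card_le_card fun v => by
    simpa only [mem_filter, mem_univ, true_and] using
      fun h => ⟨h.1, hM.isLeft_of_not_joinsY h.2⟩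

theorem card_side_isLeft_le (c : Fin s ⊕ Fin t) :
    #(univ.filter fun v => side v = c ∧ (M v).isLeft) ≤
      #(univ.filter fun v : LeftV s t α α' β β' => side v = c) :=
  card_le_card fun v => by
    simpa only [mem_filter, mem_univ, true_and] using And.left

theorem IsPM.isMMDC_mainPairs (hM : IsPM M) (hαα : ∀ i, α i ≤ α' i) (hββ : ∀ j, β j ≤ β' j)
    (hβ's : ∀ j, β' j ≤ s) : IsMMDC α α' β β' (mainPairs M) := by
  refine ⟨fun i => ?_, fun j => ?_⟩
  · have lo := hM.card_side_not_joinsY_le (.inl i)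
    have hi := card_side_isLeft_le (M := M) (.inl i)
    rw [← hM.card_cellSide_mainPairs, card_cellSide_eq_inl] at lo hi
    rw [card_side_eq_inl_not_joinsY] at lo
    rw [card_side_eq_inl] at hi
    have := hαα i
    omega
  · have lo := hM.card_side_not_joinsY_le (.inr j)
    have hi := card_side_isLeft_le (M := M) (.inr j)
    rw [← hM.card_cellSide_mainPairs] at lo hi
    rw [card_side_eq_inr_not_joinsY] at lo
    rw [card_side_eq_inr] at hi
    have := card_cellSide_eq_inr_add (mainPairs M) j
    have := hββ j
    have := hβ's j
    omega

end MatchingToMMDC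

section MMDCToMatching

/-- The part of `G` a left vertex is sent to by the perfect matching built from `L`: `some c`
means a cell `p` with `cellSide L p = c`, `none` means `Y`. The first `d_i − α_i` copies of
`A'_i` complete row `i` of `L` (`d_i` its number of cells), and the first `β'_j − e_j` copies of
`X_j` join `W_j` in covering the `s − e_j` cells of column `j` outside `L`. -/
def intendedSide (L : Finset (Fin s × Fin t)) : LeftV s t α α' β β' → Option (Fin s ⊕ Fin t)
  | .inl (.inl ⟨i, _⟩) => some (.inl i)
  | .inl (.inr ⟨i, k⟩) => if k + α i < #(L.filter fun p => p.1 = i) then some (.inl i) else none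
  | .inr (.inl ⟨j, k⟩) => if k + #(L.filter fun p => p.2 = j) < β' j then some (.inr j) else none
  | .inr (.inr ⟨j, _⟩) => some (.inr j)

def rightSide (L : Finset (Fin s × Fin t)) : RightV s t α' β → Option (Fin s ⊕ Fin t)
  | .inl p => some (cellSide L p)
  | .inr _ => none

theorem side_of_intendedSide_eq_some {L : Finset (Fin s × Fin t)} {v : LeftV s t α α' β β'}
    {c : Fin s ⊕ Fin t} (h : intendedSide L v = some c) : side v = c := by
  rcases v with ((_ | _) | (_ | _)) <;> simp only [intendedSide] at h <;>
    (try split_ifs at h) <;> simp_all [side]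

theorem joinsY_of_intendedSide_eq_none {L : Finset (Fin s × Fin t)} {v : LeftV s t α α' β β'}
    (h : intendedSide L v = none) : JoinsY v := by
  rcases v with ((_ | _) | (_ | _)) <;> simp_all [intendedSide, JoinsY]

theorem card_intendedSide_eq_inl (L : Finset (Fin s × Fin t)) (i : Fin s) :
    #(univ.filter fun v : LeftV s t α α' β β' => intendedSide L v = some (.inl i)) =
      α i + min (α' i - α i) (#(L.filter fun p => p.1 = i) - α i) := by
  rw [card_filter]
  simp [Fintype.sum_sum_type, intendedSide, card_filter_sigma_fst_eq,
    card_filter_and_sigma_fst_eq, Fin.card_filter_add_lt]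

theorem card_intendedSide_eq_inr (L : Finset (Fin s × Fin t)) (j : Fin t) :
    #(univ.filter fun v : LeftV s t α α' β β' => intendedSide L v = some (.inr j)) =
      min (β' j - β j) (β' j - #(L.filter fun p => p.2 = j)) + (s - β' j) := by
  rw [card_filter]
  simp [Fintype.sum_sum_type, intendedSide, card_filter_sigma_fst_eq,
    card_filter_and_sigma_fst_eq, Fin.card_filter_add_lt]

theorem card_rightSide_eq_some (L : Finset (Fin s × Fin t)) (c : Fin s ⊕ Fin t) :
    #(univ.filter fun r : RightV s t α' β => rightSide L r = some c) =
      #(univ.filter fun p => cellSide L p = c) := by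
  rw [card_filter, card_filter]
  simp [Fintype.sum_sum_type, rightSide]

theorem card_leftV_eq_card_rightV (hαα : ∀ i, α i ≤ α' i) (hββ : ∀ j, β j ≤ β' j)
    (hβ's : ∀ j, β' j ≤ s) (hsum : ∑ j, β j ≤ ∑ i, α' i) :
    Fintype.card (LeftV s t α α' β β') = Fintype.card (RightV s t α' β) := by
  have hA : ∑ i, α i + ∑ i, (α' i - α i) = ∑ i, α' i := by
    rw [← sum_add_distrib]
    exact sum_congr rfl fun i _ => Nat.add_sub_cancel' (hαα i)
  have hXW : ∑ j, (β' j - β j) + ∑ j, (s - β' j) + ∑ j, β j = s * t := by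
    rw [← sum_add_distrib, ← sum_add_distrib, mul_comm]
    simpa using Fintype.sum_congr (fun j => β' j - β j + (s - β' j) + β j) (fun _ => s)
      fun j => by have := hββ j; have := hβ's j; omega
  simp only [Fintype.card_sum, Fintype.card_sigma, Fintype.card_fin, Fintype.card_prod]
  omega

theorem IsMMDC.exists_isPM_mainPairs_eq {L : Finset (Fin s × Fin t)}
    (hL : IsMMDC α α' β β' L) (hαα : ∀ i, α i ≤ α' i) (hββ : ∀ j, β j ≤ β' j)
    (hβ's : ∀ j, β' j ≤ s) (hsum : ∑ j, β j ≤ ∑ i, α' i) :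
    ∃ M : LeftV s t α α' β β' ≃ RightV s t α' β, IsPM M ∧ mainPairs M = L := by
  obtain ⟨hrow, hcol⟩ := hL
  obtain ⟨M, hM⟩ := exists_equiv_forall_map_eq (intendedSide L) (rightSide L) none
    (card_leftV_eq_card_rightV hαα hββ hβ's hsum) <| by
      rintro (_ | (i | j)) hc
      · exact absurd rfl hc
      · rw [card_intendedSide_eq_inl, card_rightSide_eq_some, card_cellSide_eq_inl]
        have := hrow i
        omega
      · rw [card_intendedSide_eq_inr, card_rightSide_eq_some]
        have := card_cellSide_eq_inr_add L j
        have := hcol j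
        have := hβ's j
        omega
  have hPM : IsPM M := by
    intro v
    have h := hM v
    rcases hv : M v with p | y <;> rw [hv] at h
    · exact adj_inl_of_side_eq_cellSide (side_of_intendedSide_eq_some h.symm)
    · exact adj_inr_of_joinsY (joinsY_of_intendedSide_eq_none h.symm) y
  refine ⟨M, hPM, Finset.ext fun p => ?_⟩
  have hside : side (M.symm (.inl p)) = cellSide L p :=
    side_of_intendedSide_eq_some (by rw [← hM, M.apply_symm_apply]; rfl)
  have h := hPM.side_symm_inl p
  rw [hside] at h
  unfold cellSide at h
  split_ifs at h <;> simp_all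

end MMDCToMatching

end Reduction

theorem mainWeight_min_eq_cost_min_general {s t : ℕ} (α α' : Fin s → ℕ) (β β' : Fin t → ℕ)
    (δ : Fin s → Fin t → ℝ) (γ' γ'' : ℝ)
    (hαα : ∀ i, α i ≤ α' i)
    (hββ : ∀ j, β j ≤ β' j) (hβ's : ∀ j, β' j ≤ s)
    (hsum : ∑ j, β j ≤ ∑ i, α' i)
    (hγ2 : γ'' = 2 * γ')
    (M : LeftV s t α α' β β' ≃ RightV s t α' β) (hM : IsPM M)
    (hMmin : ∀ M'' : LeftV s t α α' β β' ≃ RightV s t α' β, IsPM M'' →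
      totalWeight δ γ' γ'' M ≤ totalWeight δ γ' γ'' M'')
    (L : Finset (Fin s × Fin t)) (hL : IsMMDC α α' β β' L)
    (hLmin : ∀ L'' : Finset (Fin s × Fin t), IsMMDC α α' β β' L'' →
      cost δ L ≤ cost δ L'') :
    mainWeight δ γ' γ'' M = cost δ L := by
  subst hγ2
  obtain ⟨ML, hML, hMLL⟩ := hL.exists_isPM_mainPairs_eq hαα hββ hβ's hsum
  have hmain_le : mainWeight δ γ' (2 * γ') M ≤ mainWeight δ γ' (2 * γ') ML := by
    have := hMmin ML hML
    rwa [totalWeight_eq_mainWeight_add δ γ' hM, totalWeight_eq_mainWeight_add δ γ' hML,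
      add_le_add_iff_right] at this
  rw [mainWeight_eq_cost_mainPairs]
  refine le_antisymm ?_ (hLmin _ (hM.isMMDC_mainPairs hαα hββ hβ's))
  calc cost δ (mainPairs M) = mainWeight δ γ' (2 * γ') M := (mainWeight_eq_cost_mainPairs ..).symm
    _ ≤ mainWeight δ γ' (2 * γ') ML := hmain_le
    _ = cost δ L := by rw [mainWeight_eq_cost_mainPairs, hMLL]

/-- **Theorem 2, minimum-matching form.** Suppose moreover `γ'' = 2γ'`,
that there exists an MMDC between `A` and `B`, that `M` is a minimum weight perfect
matching of the constructed graph `G`, and that `L` is a minimum-cost MMDC between `A`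
and `B`.  Then `Weight(Main(M)) = c(L)`. -/
theorem mainWeight_min_eq_cost_min {s t : ℕ} (α α' : Fin s → ℕ) (β β' : Fin t → ℕ)
    (δ : Fin s → Fin t → ℝ) (γ' γ'' : ℝ)
    (hs : 1 ≤ s) (ht : 1 ≤ t)
    (hδ0 : ∀ i j, 0 ≤ δ i j)
    (hα1 : ∀ i, 1 ≤ α i) (hαα : ∀ i, α i ≤ α' i) (hα't : ∀ i, α' i ≤ t)
    (hβ1 : ∀ j, 1 ≤ β j) (hββ : ∀ j, β j ≤ β' j) (hβ's : ∀ j, β' j ≤ s)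
    (hsum : ∑ j, β j ≤ ∑ i, α' i)
    (hγ' : ∀ i j, δ i j < γ') (hγ'' : γ' < γ'')
    (hγ2 : γ'' = 2 * γ')
    (M : LeftV s t α α' β β' ≃ RightV s t α' β) (hM : IsPM M)
    (hMmin : ∀ M'' : LeftV s t α α' β β' ≃ RightV s t α' β, IsPM M'' →
      totalWeight δ γ' γ'' M ≤ totalWeight δ γ' γ'' M'')
    (L : Finset (Fin s × Fin t)) (hL : IsMMDC α α' β β' L)
    (hLmin : ∀ L'' : Finset (Fin s × Fin t), IsMMDC α α' β β' L'' →
      cost δ L ≤ cost δ L'') :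
    mainWeight δ γ' γ'' M = cost δ L :=
  mainWeight_min_eq_cost_min_general α α' β β' δ γ' γ'' hαα hββ hβ's hsum hγ2 M hM hMmin L hL hLmin
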